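/- arXiv:1504.00264 — 3 statements merged into one kernel-verified Lean document; each statement's English description precedes it below -/
import Mathlib

section
/- Let q be a prime power and m ≥ 1. The number of tuples (c₁, …, c_m, a₁, …, a_m) ∈ 𝔽_{q²}^{2m} satisfying a_i^q + a_i = Σ_{j=1}^{i−1} c_j c_{i−j}^q for all i = 1, …, m is exactly q^{3m}. -/
/-! The map `T a = a ^ q + a` is additive on `𝔽_{q²}` and its image lies in the kernel of
`a ↦ a ^ q - a`. Both kernels are root sets of polynomials of degree `q`, and
`|ker T| · |im T| = q²`, so `T` maps onto the fixed field of `x ↦ x ^ q` with all fibres of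
size `q`. The right-hand sides are fixed by `x ↦ x ^ q`: raising to the `q`-th power and
substituting `j ↦ i - j` permutes their terms. Hence every `c` admits exactly `q ^ m` vectors `a`,
for a total of `q ^ (2m) · q ^ m`. -/

open Polynomial

theorem Polynomial.natDegree_X_pow_sub_C_mul_X {R : Type*} [Ring R] [Nontrivial R] {n : ℕ}
    (hn : 1 < n) (c : R) :
    (X ^ n - C c * X : R[X]).natDegree = n := by
  rw [natDegree_sub_eq_left_of_natDegree_lt] <;> rw [natDegree_X_pow]
  exact (natDegree_C_mul_le c X).trans_lt (natDegree_X (R := R) ▸ hn)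

theorem Nat.card_pow_eq_mul_le {K : Type*} [Field K] [Finite K] {n : ℕ} (hn : 1 < n) (c : K) :
    Nat.card {x : K // x ^ n = c * x} ≤ n := by
  classical
  have := Fintype.ofFinite K
  have hdeg := natDegree_X_pow_sub_C_mul_X hn c
  have hP : (X ^ n - C c * X : K[X]) ≠ 0 := by
    intro h
    rw [h, natDegree_zero] at hdeg
    omega
  rw [Nat.card_eq_fintype_card, Fintype.card_subtype, ← hdeg]
  exact card_le_degree_of_subset_roots fun x hx => by simp_all [sub_eq_zero]

theorem FiniteField.exists_ringHom_eq_pow_of_dvd_card {K : Type*} [Field K] [Fintype K] {q : ℕ}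
    (hq : q ∣ Fintype.card K) : ∃ σ : K →+* K, ∀ x, σ x = x ^ q := by
  obtain ⟨p, _, n, hp, hcard⟩ := FiniteField.card' K
  have := Fact.mk hp
  obtain ⟨i, -, rfl⟩ := (Nat.dvd_prime_pow hp).1 (hcard ▸ hq)
  exact ⟨iterateFrobenius K p i, iterateFrobenius_def p i⟩

theorem map_sum_mul_map_rev_eq_self {R : Type*} [CommSemiring R] {σ : R →+* R}
    (hσ : Function.Involutive σ) {n : ℕ} (x : Fin n → R) :
    σ (∑ j, x j * σ (x j.rev)) = ∑ j, x j * σ (x j.rev) := by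
  simp only [map_sum, map_mul, hσ _]
  exact Fintype.sum_equiv Fin.revPerm _ _ fun j => by simp [mul_comm]

theorem FiniteField.pow_pow_eq_self_of_card_eq_sq {K : Type*} [Field K] [Fintype K] {q : ℕ}
    (hK : Fintype.card K = q ^ 2) (x : K) : (x ^ q) ^ q = x := by
  rw [← pow_mul, ← sq, ← hK, FiniteField.pow_card]

theorem FiniteField.card_pow_add_self_eq {K : Type*} [Field K] [Fintype K] {q : ℕ}
    (hK : Fintype.card K = q ^ 2) {b : K} (hb : b ^ q = b) :
    Nat.card {a : K // a ^ q + a = b} = q := by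
  obtain ⟨σ, hσ⟩ := exists_ringHom_eq_pow_of_dvd_card (hK ▸ dvd_pow_self q two_ne_zero)
  have hq : 1 < q := by
    have := Fintype.one_lt_card (α := K)
    nlinarith
  set T : K →+ K := σ.toAddMonoidHom + AddMonoidHom.id K
  set S : K →+ K := σ.toAddMonoidHom - AddMonoidHom.id K
  have hT : ∀ x, T x = x ^ q + x := fun x => hσ x ▸ rfl
  have hS : ∀ x, S x = x ^ q - x := fun x => hσ x ▸ rfl
  have hker_le (f : K →+ K) (c : K) (hf : ∀ x, f x = 0 ↔ x ^ q = c * x) :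
      Nat.card f.ker ≤ q :=
    (Nat.card_congr (Equiv.subtypeEquivRight fun x => f.mem_ker.trans (hf x))).trans_le
      (Nat.card_pow_eq_mul_le hq c)
  have hTker : Nat.card T.ker ≤ q :=
    hker_le T (-1) fun x => by rw [hT, neg_one_mul, eq_neg_iff_add_eq_zero]
  have hSker : Nat.card S.ker ≤ q :=
    hker_le S 1 fun x => by rw [hS, one_mul, sub_eq_zero]
  have hST : T.range ≤ S.ker := by
    rintro _ ⟨x, rfl⟩
    rw [AddMonoidHom.mem_ker, hS, hT, ← hσ, map_add, hσ, hσ, pow_pow_eq_self_of_card_eq_sq hK]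
    ring
  have hcard : Nat.card T.ker * Nat.card T.range = q * q := by
    rw [← AddSubgroup.index_ker, T.ker.card_mul_index, Nat.card_eq_fintype_card, hK, sq]
  have hTrange : Nat.card T.range ≤ q := (AddSubgroup.card_le_of_le hST).trans hSker
  have hTker_eq : Nat.card T.ker = q := by nlinarith
  have hrange_eq : T.range = S.ker := AddSubgroup.eq_of_le_of_card_ge hST (by nlinarith)
  obtain ⟨a₀, rfl⟩ : b ∈ T.range := hrange_eq ▸ by rw [AddMonoidHom.mem_ker, hS, hb, sub_self]
  calc Nat.card {a : K // a ^ q + a = T a₀}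
      = Nat.card (T ⁻¹' {T a₀}) := Nat.card_congr (Equiv.subtypeEquivRight fun x => by simp [hT])
    _ = q := (Nat.card_congr (T.fiberEquivKer a₀)).trans hTker_eq

/-- `∑_{j=1}^{i-1} c_j c_{i-j}^q`, shifted to `0`-based indices. -/
def frobeniusConvolution {K : Type*} [CommSemiring K] {m : ℕ} (q : ℕ) (c : Fin m → K)
    (i : Fin m) : K :=
  ∑ j : Fin i.val, c (Fin.castLE i.isLt.le j) *
    (c ⟨i.val - j.val - 1,
      Nat.lt_of_le_of_lt (Nat.le_trans (Nat.sub_le _ _) (Nat.sub_le _ _)) i.isLt⟩) ^ q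

theorem FiniteField.frobeniusConvolution_pow_eq_self {K : Type*} [Field K] [Fintype K] {q : ℕ}
    (hK : Fintype.card K = q ^ 2) {m : ℕ} (c : Fin m → K) (i : Fin m) :
    frobeniusConvolution q c i ^ q = frobeniusConvolution q c i := by
  obtain ⟨σ, hσ⟩ := exists_ringHom_eq_pow_of_dvd_card (hK ▸ dvd_pow_self q two_ne_zero)
  have hσσ : Function.Involutive σ := fun x => by
    rw [hσ, hσ, pow_pow_eq_self_of_card_eq_sq hK]
  have hrev (j : Fin i.val) : c ⟨i.val - j.val - 1,
      Nat.lt_of_le_of_lt (Nat.le_trans (Nat.sub_le _ _) (Nat.sub_le _ _)) i.isLt⟩ =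
      c (Fin.castLE i.isLt.le j.rev) :=
    congrArg c (Fin.ext (by simp only [Fin.val_castLE, Fin.val_rev]; omega))
  simp only [frobeniusConvolution, hrev, ← hσ]
  exact map_sum_mul_map_rev_eq_self hσσ _

theorem Nat.card_subtype_forall_of_card_eq {ι α : Type*} [Fintype ι] {p : ι → α → Prop} {n : ℕ}
    (h : ∀ i, Nat.card {a // p i a} = n) :
    Nat.card {f : ι → α // ∀ i, p i (f i)} = n ^ Fintype.card ι := by
  rw [Nat.card_congr Equiv.subtypePiEquivPi, Nat.card_pi]
  simp only [h, Finset.prod_const, Finset.card_univ]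

theorem stmt2_general (q m : ℕ) (K : Type*) [Field K] [Fintype K]
    (hK : Fintype.card K = q ^ 2) :
    Nat.card {ca : (Fin m → K) × (Fin m → K) //
        ∀ i : Fin m, (ca.2 i) ^ q + ca.2 i =
          ∑ j : Fin i.val, ca.1 (Fin.castLE i.isLt.le j) *
            (ca.1 ⟨i.val - j.val - 1,
              Nat.lt_of_le_of_lt (Nat.le_trans (Nat.sub_le _ _) (Nat.sub_le _ _)) i.isLt⟩) ^ q}
      = q ^ (3 * m) := by
  refine (Nat.card_congr (Equiv.subtypeProdEquivSigmaSubtype fun (c a : Fin m → K) =>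
    ∀ i, a i ^ q + a i = frobeniusConvolution q c i)).trans ?_
  rw [Nat.card_sigma, Finset.sum_congr rfl fun c _ => Nat.card_subtype_forall_of_card_eq fun i =>
    FiniteField.card_pow_add_self_eq hK (FiniteField.frobeniusConvolution_pow_eq_self hK c i),
    Finset.sum_const, Finset.card_univ, Fintype.card_fun, Fintype.card_fin, hK, smul_eq_mul,
    ← pow_mul, ← pow_add]
  ring

/-- Let `q` be a prime power and `m ≥ 1`. The number of tuples
`(c₁, …, c_m, a₁, …, a_m) ∈ 𝔽_{q²}^{2m}` satisfying
`a_i^q + a_i = Σ_{j=1}^{i−1} c_j c_{i−j}^q` for all `i = 1, …, m` is exactly `q^{3m}`.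
Here `𝔽_{q²}` is a finite field `K` with `q²` elements; tuples are modeled with 0-based
indexing (index `k : Fin m` corresponds to subscript `k+1`). -/
theorem stmt2 (q m : ℕ) (hq : IsPrimePow q) (hm : 1 ≤ m) (K : Type*) [Field K] [Fintype K]
    (hK : Fintype.card K = q ^ 2) :
    Nat.card {ca : (Fin m → K) × (Fin m → K) //
        ∀ i : Fin m, (ca.2 i) ^ q + ca.2 i =
          ∑ j : Fin i.val, ca.1 (Fin.castLE i.isLt.le j) *
            (ca.1 ⟨i.val - j.val - 1,
              Nat.lt_of_le_of_lt (Nat.le_trans (Nat.sub_le _ _) (Nat.sub_le _ _)) i.isLt⟩) ^ q}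
      = q ^ (3 * m) :=
  stmt2_general q m K hK
end

section
/- Let q be an odd prime power, D ∈ 𝔽_q a non-square, and α₀ = [[0,1],[D,0]] ∈ M₂(𝔽_q). Suppose g ∈ GL₂(𝔽_q) is such that g⁻¹·α₀·g − α₀ = [[B₁, B₂],[−B₂·D, −B₁]] for some B₁, B₂ ∈ 𝔽_q. Then, writing g = [[g₁,g₂],[g₃,g₄]], one has g₁ = g₄ and g₃ = g₂·D; in particular g commutes with α₀. -/
/-!
Conjugating by `g` turns the hypothesis into `α₀ g - g α₀ = g B`. Commutators have trace zero,
and so does `α₀ [α₀, g] = [α₀, α₀ g]`; hence `tr (g B) = tr (α₀ g B) = 0`. These two traces form a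
linear system in `g₁ - g₄` and `g₃ - g₂ D` whose determinant is the norm `B₁² - B₂² D` of
`B₁ + B₂ √D`, which vanishes only for `B = 0` since `D` is not a square. If `B = 0`, then `g`
commutes with `α₀` outright.
-/

open Matrix

theorem Matrix.mul_sub_mul_eq_mul_of_inv_mul_mul_sub {n R : Type*} [Fintype n] [DecidableEq n]
    [CommRing R] {g A B : Matrix n n R} (hg : IsUnit g.det) (h : g⁻¹ * A * g - A = B) :
    A * g - g * A = g * B := by
  rw [← h, Matrix.mul_sub, ← Matrix.mul_assoc, ← Matrix.mul_assoc, mul_nonsing_inv g hg,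
    Matrix.one_mul]

theorem Matrix.trace_mul_sub_mul_eq_zero {n R : Type*} [Fintype n] [CommRing R]
    (A B : Matrix n n R) : trace (A * B - B * A) = 0 := by
  rw [trace_sub, trace_mul_comm, sub_self]

theorem Matrix.trace_eq_zero_and_trace_mul_eq_zero_of_mul_sub_mul_eq {n R : Type*} [Fintype n]
    [CommRing R] {g A C : Matrix n n R} (h : A * g - g * A = C) :
    trace C = 0 ∧ trace (A * C) = 0 := by
  refine ⟨h ▸ trace_mul_sub_mul_eq_zero A g, ?_⟩
  rw [← h, Matrix.mul_sub, ← Matrix.mul_assoc A g A]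
  exact trace_mul_sub_mul_eq_zero A (A * g)

section

variable {K : Type*} [Field K] {D : K}

theorem sq_sub_sq_mul_eq_zero_iff (hD : ¬∃ x : K, x ^ 2 = D) {a b : K} :
    a ^ 2 - b ^ 2 * D = 0 ↔ a = 0 ∧ b = 0 := by
  refine ⟨fun h => ?_, fun ⟨ha, hb⟩ => by simp [ha, hb]⟩
  have hb : b = 0 := by
    by_contra hb
    exact hD ⟨a / b, by field_simp; linear_combination h⟩
  subst hb
  exact ⟨pow_eq_zero_iff two_ne_zero |>.mp (by simpa using h), rfl⟩

theorem commute_companion_iff (g : Matrix (Fin 2) (Fin 2) K) :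
    Commute g !![0, 1; D, 0] ↔ g 0 0 = g 1 1 ∧ g 1 0 = g 0 1 * D := by
  rw [Commute, SemiconjBy, ← Matrix.ext_iff]
  constructor
  · intro h
    have h01 := h 0 1
    have h00 := h 0 0
    simp only [mul_apply, of_apply, cons_val', cons_val_one, cons_val_fin_one, Fin.sum_univ_two,
      cons_val_zero, mul_one, mul_zero, add_zero, zero_mul, one_mul, zero_add] at h01 h00
    exact ⟨h01, h00.symm⟩
  · rintro ⟨h₁, h₂⟩ i j
    fin_cases i <;> fin_cases j <;> simp [mul_apply, Fin.sum_univ_two, h₁, h₂] <;> ring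

theorem trace_mul_eq_and_trace_companion_mul_eq (g : Matrix (Fin 2) (Fin 2) K) (B₁ B₂ : K) :
    trace (g * !![B₁, B₂; -B₂ * D, -B₁]) = B₁ * (g 0 0 - g 1 1) + B₂ * (g 1 0 - g 0 1 * D) ∧
      trace (!![0, 1; D, 0] * (g * !![B₁, B₂; -B₂ * D, -B₁])) =
        B₂ * D * (g 0 0 - g 1 1) + B₁ * (g 1 0 - g 0 1 * D) := by
  constructor <;> simp [trace_fin_two, mul_apply, Fin.sum_univ_two, vecMul, dotProduct] <;> ring

theorem eq_zero_of_sq_sub_sq_mul_ne_zero {B₁ B₂ x y : K} (hN : B₁ ^ 2 - B₂ ^ 2 * D ≠ 0)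
    (h₁ : B₁ * x + B₂ * y = 0) (h₂ : B₂ * D * x + B₁ * y = 0) : x = 0 ∧ y = 0 :=
  ⟨(mul_eq_zero.mp (by linear_combination B₁ * h₁ - B₂ * h₂ :
      (B₁ ^ 2 - B₂ ^ 2 * D) * x = 0)).resolve_left hN,
    (mul_eq_zero.mp (by linear_combination B₁ * h₂ - B₂ * D * h₁ :
      (B₁ ^ 2 - B₂ ^ 2 * D) * y = 0)).resolve_left hN⟩

theorem commute_companion_of_commutator_eq_mul (hD : ¬∃ x : K, x ^ 2 = D)
    {g : Matrix (Fin 2) (Fin 2) K} {B₁ B₂ : K}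
    (h : !![0, 1; D, 0] * g - g * !![0, 1; D, 0] = g * !![B₁, B₂; -B₂ * D, -B₁]) :
    Commute g !![0, 1; D, 0] := by
  by_cases hB : B₁ = 0 ∧ B₂ = 0
  · obtain ⟨rfl, rfl⟩ := hB
    rw [show !![(0 : K), 0; -0 * D, -0] = 0 by ext i j; fin_cases i <;> fin_cases j <;> simp,
      Matrix.mul_zero, sub_eq_zero] at h
    exact h.symm
  have hN : B₁ ^ 2 - B₂ ^ 2 * D ≠ 0 := mt (sq_sub_sq_mul_eq_zero_iff hD).mp hB
  obtain ⟨htr, htrα⟩ := trace_eq_zero_and_trace_mul_eq_zero_of_mul_sub_mul_eq h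
  obtain ⟨htr_eq, htrα_eq⟩ := trace_mul_eq_and_trace_companion_mul_eq g B₁ B₂
  obtain ⟨hx, hy⟩ := eq_zero_of_sq_sub_sq_mul_ne_zero hN (htr_eq ▸ htr) (htrα_eq ▸ htrα)
  exact (commute_companion_iff g).mpr ⟨sub_eq_zero.mp hx, sub_eq_zero.mp hy⟩

end

theorem stmt11_general (K : Type*) [Field K] (D : K) (hD : ¬ ∃ x : K, x ^ 2 = D)
    (g : Matrix (Fin 2) (Fin 2) K) (hg : IsUnit g.det) (B₁ B₂ : K)
    (h : g⁻¹ * !![0, 1; D, 0] * g - !![0, 1; D, 0] = !![B₁, B₂; -B₂ * D, -B₁]) :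
    g 0 0 = g 1 1 ∧ g 1 0 = g 0 1 * D ∧ g * !![0, 1; D, 0] = !![0, 1; D, 0] * g := by
  have hcomm : Commute g !![0, 1; D, 0] :=
    commute_companion_of_commutator_eq_mul hD (mul_sub_mul_eq_mul_of_inv_mul_mul_sub hg h)
  obtain ⟨h₁, h₂⟩ := (commute_companion_iff g).mp hcomm
  exact ⟨h₁, h₂, hcomm⟩

/-- Let `q` be an odd prime power, `D ∈ 𝔽_q` a non-square, and
`α₀ = [[0,1],[D,0]] ∈ M₂(𝔽_q)`. Suppose `g ∈ GL₂(𝔽_q)` satisfies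
`g⁻¹·α₀·g − α₀ = [[B₁, B₂],[−B₂·D, −B₁]]` for some `B₁, B₂ ∈ 𝔽_q`. Then, writing
`g = [[g₁,g₂],[g₃,g₄]]`, one has `g₁ = g₄` and `g₃ = g₂·D`; in particular `g`
commutes with `α₀`. -/
theorem stmt11 (q : ℕ) (hq : IsPrimePow q) (hodd : Odd q) (K : Type*) [Field K] [Fintype K]
    (hK : Fintype.card K = q) (D : K) (hD : ¬ ∃ x : K, x ^ 2 = D)
    (g : Matrix (Fin 2) (Fin 2) K) (hg : IsUnit g.det) (B₁ B₂ : K)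
    (h : g⁻¹ * !![0, 1; D, 0] * g - !![0, 1; D, 0] = !![B₁, B₂; -B₂ * D, -B₁]) :
    g 0 0 = g 1 1 ∧ g 1 0 = g 0 1 * D ∧ g * !![0, 1; D, 0] = !![0, 1; D, 0] * g :=
  stmt11_general K D hD g hg B₁ B₂ h
end

section
/- Let q be a power of 2, D ∈ 𝔽_q such that T² + T + D is irreducible over 𝔽_q, and α₀ = [[0,D],[1,1]] ∈ M₂(𝔽_q). Suppose g = [[g₁,g₂],[g₃,g₄]] ∈ GL₂(𝔽_q) is such that g⁻¹·α₀·g − α₀ = [[B₁, B₁ + B₃·D],[B₃, B₁]] for some B₁, B₃ ∈ 𝔽_q. Then g₂ = g₃·D and g₄ = g₁ + g₃; in particular g commutes with α₀. -/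
/-!
Conjugation preserves the determinant, so `det (α₀ + B) = det α₀`. In characteristic 2 this
says that `B₁² + B₁B₃ + D·B₃² = 0`, i.e. the norm form of `𝔽_q[α₀] ≅ 𝔽_{q²}` vanishes at
`(B₁, B₃)`. Since `T² + T + D` has no root, that form is anisotropic, so `B₁ = B₃ = 0`:
`g` centralises `α₀`, which pins down its entries.
-/

theorem eq_zero_of_sq_add_mul_add_mul_sq_eq_zero {K : Type*} [Field K] {D : K}
    (hD : ∀ x : K, x ^ 2 + x + D ≠ 0) {a b : K} (h : a ^ 2 + a * b + D * b ^ 2 = 0) :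
    a = 0 ∧ b = 0 := by
  have hb : b = 0 := by
    by_contra hb
    apply hD (a / b)
    field_simp
    linear_combination h
  subst hb
  exact ⟨pow_eq_zero_iff two_ne_zero |>.mp (by simpa using h), rfl⟩

theorem sq_add_mul_add_mul_sq_eq_zero_of_det_eq {K : Type*} [CommRing K] [CharP K 2]
    {D B₁ B₃ : K}
    (h : (!![0, D; 1, 1] + !![B₁, B₁ + B₃ * D; B₃, B₁]).det = (!![0, D; 1, 1]).det) :
    B₁ ^ 2 + B₁ * B₃ + D * B₃ ^ 2 = 0 := by
  simp only [Matrix.det_fin_two, Matrix.add_apply, Matrix.of_apply, Matrix.cons_val',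
    Matrix.cons_val_zero, Matrix.cons_val_one, Matrix.empty_val', Matrix.cons_val_fin_one] at h
  linear_combination h + (B₁ * B₃ + B₃ * D + B₃ ^ 2 * D) * (CharTwo.two_eq_zero (R := K))

theorem Matrix.mul_eq_mul_of_inv_mul_mul_eq {n R : Type*} [Fintype n] [DecidableEq n]
    [CommRing R] {g A : Matrix n n R}
    (hg : IsUnit g.det) (h : g⁻¹ * A * g = A) : g * A = A * g := by
  calc g * A = g * (g⁻¹ * (A * g)) := by rw [← Matrix.mul_assoc g⁻¹, h]
    _ = A * g := Matrix.mul_nonsing_inv_cancel_left _ _ hg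

theorem entries_of_mul_companion_eq {K : Type*} [CommRing K] {D : K}
    {g : Matrix (Fin 2) (Fin 2) K} (h : g * !![0, D; 1, 1] = !![0, D; 1, 1] * g) :
    g 0 1 = g 1 0 * D ∧ g 1 1 = g 0 0 + g 1 0 := by
  have h00 := congrFun (congrFun h 0) 0
  have h10 := congrFun (congrFun h 1) 0
  simp only [Matrix.mul_apply, Fin.sum_univ_two, Matrix.of_apply, Matrix.cons_val',
    Matrix.cons_val_zero, Matrix.cons_val_one, Matrix.cons_val_fin_one, mul_zero, mul_one,
    zero_mul, one_mul, zero_add] at h00 h10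
  exact ⟨by linear_combination h00, by linear_combination h10⟩

theorem stmt12_general (r q : ℕ) (hq : q = 2 ^ r) (K : Type*) [Field K] [Fintype K]
    (hK : Fintype.card K = q) (D : K) (hD : ∀ x : K, x ^ 2 + x + D ≠ 0)
    (g : Matrix (Fin 2) (Fin 2) K) (hg : IsUnit g.det) (B₁ B₃ : K)
    (h : g⁻¹ * !![0, D; 1, 1] * g - !![0, D; 1, 1] = !![B₁, B₁ + B₃ * D; B₃, B₁]) :
    g 0 1 = g 1 0 * D ∧ g 1 1 = g 0 0 + g 1 0 ∧
      g * !![0, D; 1, 1] = !![0, D; 1, 1] * g := by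
  have : Fact (Nat.Prime 2) := ⟨Nat.prime_two⟩
  have : CharP K 2 := charP_of_card_eq_prime_pow (hK.trans hq)
  have hconj := sub_eq_iff_eq_add'.mp h
  have hdet := hconj ▸ Matrix.det_conj' ((Matrix.isUnit_iff_isUnit_det g).mpr hg) _
  obtain ⟨rfl, rfl⟩ :=
    eq_zero_of_sq_add_mul_add_mul_sq_eq_zero hD (sq_add_mul_add_mul_sq_eq_zero_of_det_eq hdet)
  have hcomm : g * !![0, D; 1, 1] = !![0, D; 1, 1] * g :=
    Matrix.mul_eq_mul_of_inv_mul_mul_eq hg (by simpa using hconj)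
  exact ⟨(entries_of_mul_companion_eq hcomm).1, (entries_of_mul_companion_eq hcomm).2, hcomm⟩

/-- Let `q` be a power of 2, `D ∈ 𝔽_q` such that `T² + T + D` is irreducible over `𝔽_q`
(equivalently, has no root in `𝔽_q`), and `α₀ = [[0,D],[1,1]] ∈ M₂(𝔽_q)`. Suppose
`g = [[g₁,g₂],[g₃,g₄]] ∈ GL₂(𝔽_q)` satisfies
`g⁻¹·α₀·g − α₀ = [[B₁, B₁ + B₃·D],[B₃, B₁]]` for some `B₁, B₃ ∈ 𝔽_q`. Then
`g₂ = g₃·D` and `g₄ = g₁ + g₃`; in particular `g` commutes with `α₀`. -/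
theorem stmt12 (r q : ℕ) (hr : 1 ≤ r) (hq : q = 2 ^ r) (K : Type*) [Field K] [Fintype K]
    (hK : Fintype.card K = q) (D : K) (hD : ∀ x : K, x ^ 2 + x + D ≠ 0)
    (g : Matrix (Fin 2) (Fin 2) K) (hg : IsUnit g.det) (B₁ B₃ : K)
    (h : g⁻¹ * !![0, D; 1, 1] * g - !![0, D; 1, 1] = !![B₁, B₁ + B₃ * D; B₃, B₁]) :
    g 0 1 = g 1 0 * D ∧ g 1 1 = g 0 0 + g 1 0 ∧
      g * !![0, D; 1, 1] = !![0, D; 1, 1] * g :=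
  stmt12_general r q hq K hK D hD g hg B₁ B₃ h
end
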